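/- For any modal formula A, the following are equivalent: (1) A is a theorem of MND; (2) A is valid in all MND-frames; (3) A is valid in all finite MND-frames. -/

import Mathlib

/-- Modal formulas: variables, ⊥, →, □. -/
inductive Fml : Type
  | var : ℕ → Fml
  | bot : Fml
  | imp : Fml → Fml → Fml
  | box : Fml → Fml
  deriving DecidableEq

namespace Fml

/-- ¬A is an abbreviation for A → ⊥. -/
def neg (A : Fml) : Fml := imp A bot

/-- ⊤ is an abbreviation for ¬⊥. -/
def top : Fml := neg bot

/-- A ∧ B is an abbreviation for ¬(A → ¬B). -/
def and (A B : Fml) : Fml := neg (imp A (neg B))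

/-- Uniform substitution. -/
def subst (σ : ℕ → Fml) : Fml → Fml
  | var n => σ n
  | bot => bot
  | imp A B => imp (subst σ A) (subst σ B)
  | box A => box (subst σ A)

end Fml

/-- A formula is a propositional tautology if it is true under every valuation
that respects ⊥ and →, treating variables and boxed formulas as atoms. -/
def IsTautology (A : Fml) : Prop :=
  ∀ val : Fml → Bool,
    (val Fml.bot = false) →
    (∀ B C : Fml, val (Fml.imp B C) = (!(val B) || val C)) →
    val A = true

/-- Provability in the extension of the logic MN by the axioms in `Ax`:
axioms are all propositional tautologies and the members of `Ax`; the rules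
are Modus Ponens, Necessitation, and RM. -/
inductive MNProv (Ax : Fml → Prop) : Fml → Prop
  | taut {A : Fml} : IsTautology A → MNProv Ax A
  | ax {A : Fml} : Ax A → MNProv Ax A
  | mp {A B : Fml} : MNProv Ax (A.imp B) → MNProv Ax A → MNProv Ax B
  | nec {A : Fml} : MNProv Ax A → MNProv Ax A.box
  | rm {A B : Fml} : MNProv Ax (A.imp B) → MNProv Ax (A.box.imp B.box)

/-- The axiom P : ¬□⊥. -/
def AxP : Fml → Prop := fun A => A = (Fml.box Fml.bot).neg

/-- The axiom scheme D : ¬(□B ∧ □¬B). -/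
def AxD : Fml → Prop := fun A => ∃ B : Fml, A = ((B.box).and (B.neg.box)).neg

/-- The axiom scheme 4 : □B → □□B. -/
def AxF : Fml → Prop := fun A => ∃ B : Fml, A = B.box.imp B.box.box

def MN : Fml → Prop := MNProv (fun _ => False)
def MNP : Fml → Prop := MNProv AxP
def MND : Fml → Prop := MNProv AxD
def MNF : Fml → Prop := MNProv AxF
def MNPF : Fml → Prop := MNProv (fun A => AxP A ∨ AxF A)
def MNDF : Fml → Prop := MNProv (fun A => AxD A ∨ AxF A)

/-- An MN-frame: a nonempty set `W` together with a relation between worlds and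
nonempty subsets of `W` satisfying monotonicity. -/
structure MNFrame (W : Type*) where
  nonempty : Nonempty W
  rel : W → Set W → Prop
  rel_nonempty : ∀ (x : W) (V : Set W), rel x V → V.Nonempty
  mono : ∀ (x : W) (V U : Set W), rel x V → V ⊆ U → rel x U

/-- `Sat` is a satisfaction relation on the MN-frame `F`. -/
structure IsSat {W : Type*} (F : MNFrame W) (Sat : W → Fml → Prop) : Prop where
  bot : ∀ x : W, ¬ Sat x Fml.bot
  imp : ∀ (x : W) (A B : Fml), Sat x (A.imp B) ↔ (Sat x A → Sat x B)
  box : ∀ (x : W) (A : Fml), Sat x A.box ↔ ∀ V : Set W, F.rel x V → ∃ y ∈ V, Sat y A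

/-- A formula is valid in an MN-frame if it is satisfied at every world under
every satisfaction relation on the frame. -/
def Valid {W : Type*} (F : MNFrame W) (A : Fml) : Prop :=
  ∀ Sat : W → Fml → Prop, IsSat F Sat → ∀ x : W, Sat x A

/-- Transitivity of an MN-frame. -/
def MNFrame.IsTransitive {W : Type*} (F : MNFrame W) : Prop :=
  ∀ (x : W) (V : Set W) (U : W → Set W),
    F.rel x V → (∀ y ∈ V, F.rel y (U y)) → F.rel x (⋃ y ∈ V, U y)

/-- MNP-frames: every world is related to some subset. -/
def MNFrame.IsMNP {W : Type*} (F : MNFrame W) : Prop :=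
  ∀ x : W, ∃ V : Set W, F.rel x V

/-- MND-frames: every world is related to `V` or to its complement. -/
def MNFrame.IsMND {W : Type*} (F : MNFrame W) : Prop :=
  ∀ (x : W) (V : Set W), F.rel x V ∨ F.rel x Vᶜ


/-! Soundness is checked rule by rule; an instance of D holds in an MND-frame because `x` is
related to `{y | y ⊩ B}` or to its complement.

For completeness, a non-theorem `A` is refuted in a finite canonical model whose worlds are the
subsets `w` of the subformulas of `A` with consistent characteristic conjunction `χ_w`; `x` is
related to `V` iff `V` is nonempty and every `□C ∈ x` has a witness `y ∈ V` with `C ∈ y`.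
Necessitation and RM give the truth lemma. The frame is an MND-frame: if `x` is not related to a
nonempty `V`, some `□C₀ ∈ x` has no witness in `V`, so every world containing `C₀` lies in `Vᶜ`,
and D makes `C ∧ C₀` consistent for every `□C ∈ x`. -/

open Fml

structure IsPropVal (v : Fml → Bool) : Prop where
  bot : v bot = false
  imp : ∀ A B, v (A.imp B) = (!v A || v B)

namespace IsPropVal

variable {v : Fml → Bool} (hv : IsPropVal v)
include hv

lemma neg (A : Fml) : v A.neg = !v A := by
  simp [Fml.neg, hv.imp, hv.bot]

lemma and (A B : Fml) : v (A.and B) = (v A && v B) := by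
  simp [Fml.and, hv.neg, hv.imp]

lemma top : v Fml.top = true := by
  simp [Fml.top, hv.neg, hv.bot]

end IsPropVal

lemma isTautology_iff {A : Fml} : IsTautology A ↔ ∀ v, IsPropVal v → v A = true :=
  ⟨fun h v hv => h v hv.bot hv.imp, fun h v hb hi => h v ⟨hb, hi⟩⟩

namespace MNProv

variable {Ax : Fml → Prop} {A B C : Fml}

lemma mp_of_entails (hAB : ∀ v, IsPropVal v → v A = true → v B = true)
    (hA : MNProv Ax A) : MNProv Ax B :=
  .mp (.taut <| isTautology_iff.2 fun v hv => by
    cases h : v A <;> simp [hv.imp, h, hAB v hv]) hA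

lemma mp₂_of_entails (hABC : ∀ v, IsPropVal v → v A = true → v B = true → v C = true)
    (hA : MNProv Ax A) (hB : MNProv Ax B) : MNProv Ax C :=
  .mp (hA.mp_of_entails (B := B.imp C) fun v hv hvA => by
    cases h : v B <;> simp [hv.imp, h, hABC v hv hvA]) hB

end MNProv

def Consistent (Ax : Fml → Prop) (A : Fml) : Prop := ¬ MNProv Ax A.neg

namespace Consistent

variable {Ax : Fml → Prop} {A B C : Fml}

lemma of_not_mnprov (h : ¬ MNProv Ax A) : Consistent Ax A.neg :=
  fun hA => h (hA.mp_of_entails fun v hv => by simp [hv.neg])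

lemma of_entails (h : Consistent Ax A) (hAB : ∀ v, IsPropVal v → v A = true → v B = true) :
    Consistent Ax B :=
  fun hB => h (hB.mp_of_entails fun v hv => by
    cases hvA : v A <;> simp_all [hv.neg])

lemma exists_val (h : Consistent Ax A) : ∃ v, IsPropVal v ∧ v A = true := by
  by_contra! hA
  exact h (.taut <| isTautology_iff.2 fun v hv => by simpa [hv.neg] using hA v hv)

lemma and_or_and_neg (h : Consistent Ax A) (B : Fml) :
    Consistent Ax (A.and B) ∨ Consistent Ax (A.and B.neg) := by
  by_contra! hB
  simp only [Consistent, not_not] at hB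
  refine h (MNProv.mp₂_of_entails (fun v hv => ?_) hB.1 hB.2)
  simp only [hv.neg, hv.and]
  cases v A <;> cases v B <;> decide

lemma of_neg_box (h : Consistent Ax B.box.neg) : Consistent Ax B.neg := by
  intro hB
  have hB : MNProv Ax B := hB.mp_of_entails fun v hv => by simp [hv.neg]
  exact h <| hB.nec.mp_of_entails fun v hv => by simp [hv.neg]

lemma of_box_and_neg_box (h : Consistent Ax (C.box.and B.box.neg)) :
    Consistent Ax (C.and B.neg) := by
  intro hCB
  have hCB : MNProv Ax (C.imp B) := hCB.mp_of_entails fun v hv => by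
    simp only [hv.neg, hv.and, hv.imp]
    cases v C <;> cases v B <;> decide
  refine h <| hCB.rm.mp_of_entails fun v hv => ?_
  simp only [hv.neg, hv.and, hv.imp]
  cases v C.box <;> cases v B.box <;> decide

lemma of_box_and_box (hD : ∀ A, AxD A → Ax A) (h : Consistent Ax (C.box.and B.box)) :
    Consistent Ax (C.and B) := by
  intro hCB
  have hCB : MNProv Ax (C.imp B.neg) := hCB.mp_of_entails fun v hv => by
    simp only [hv.neg, hv.and, hv.imp]
    cases v C <;> cases v B <;> decide
  have hD : MNProv Ax (B.box.and B.neg.box).neg := .ax (hD _ ⟨B, rfl⟩)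
  refine h <| MNProv.mp₂_of_entails (fun v hv => ?_) hCB.rm hD
  simp only [hv.neg, hv.and, hv.imp]
  cases v C.box <;> cases v B.box <;> cases v B.neg.box <;> decide

end Consistent

def AgreesOn (L : List Fml) (w : Finset Fml) (v : Fml → Bool) : Prop :=
  ∀ B ∈ L, (v B = true ↔ B ∈ w)

namespace AgreesOn

variable {L : List Fml} {w : Finset Fml} {v : Fml → Bool} {B : Fml}

lemma cons_insert (h : AgreesOn L w v) (hB : v B = true) : AgreesOn (B :: L) (insert B w) v := by
  intro C hC
  rcases eq_or_ne C B with rfl | hCB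
  · simp [hB]
  · simp [hCB, h C (List.mem_of_ne_of_mem hCB hC)]

lemma cons_erase (h : AgreesOn L w v) (hB : v B = false) : AgreesOn (B :: L) (w.erase B) v := by
  intro C hC
  rcases eq_or_ne C B with rfl | hCB
  · simp [hB]
  · simp [hCB, h C (List.mem_of_ne_of_mem hCB hC)]

end AgreesOn

def charFml (L : List Fml) (w : Finset Fml) : Fml :=
  L.foldr (fun B acc => (if B ∈ w then B else B.neg).and acc) Fml.top

lemma IsPropVal.charFml_eq_true {v : Fml → Bool} (hv : IsPropVal v) (L : List Fml)
    (w : Finset Fml) : v (charFml L w) = true ↔ AgreesOn L w v := by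
  induction L with
  | nil => simp [charFml, AgreesOn, hv.top]
  | cons B L ih =>
    rw [charFml, List.foldr_cons, hv.and, Bool.and_eq_true, ← charFml, ih]
    unfold AgreesOn
    rw [List.forall_mem_cons]
    split_ifs with hB <;> simp [hB, hv.neg]

lemma Consistent.exists_and_charFml {Ax : Fml → Prop} {D : Fml} (h : Consistent Ax D)
    (L : List Fml) : ∃ w ⊆ L.toFinset, Consistent Ax (D.and (charFml L w)) := by
  induction L with
  | nil => exact ⟨∅, by simp, h.of_entails fun v hv hD => by simp [charFml, hv.and, hv.top, hD]⟩
  | cons B L ih =>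
    obtain ⟨w, hwL, hw⟩ := ih
    have hsub : insert B w ⊆ (B :: L).toFinset := by
      simpa using Finset.insert_subset_insert B hwL
    have hsub' : w.erase B ⊆ (B :: L).toFinset :=
      (Finset.erase_subset B w).trans (hwL.trans (by simp))
    rcases hw.and_or_and_neg B with hB | hB
    · refine ⟨insert B w, hsub, hB.of_entails fun v hv hvB => ?_⟩
      simp only [hv.and, Bool.and_eq_true, hv.charFml_eq_true] at hvB ⊢
      exact ⟨hvB.1.1, hvB.1.2.cons_insert hvB.2⟩
    · refine ⟨w.erase B, hsub', hB.of_entails fun v hv hvB => ?_⟩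
      simp only [hv.and, hv.neg, Bool.and_eq_true, Bool.not_eq_true', hv.charFml_eq_true] at hvB ⊢
      exact ⟨hvB.1.1, hvB.1.2.cons_erase hvB.2⟩

namespace IsSat

variable {W : Type*} {F : MNFrame W} {Sat : W → Fml → Prop} (hS : IsSat F Sat)
include hS

lemma neg (x : W) (A : Fml) : Sat x A.neg ↔ ¬ Sat x A := by
  rw [Fml.neg, hS.imp]
  exact ⟨fun h hA => hS.bot x (h hA), fun h hA => (h hA).elim⟩

lemma and (x : W) (A B : Fml) : Sat x (A.and B) ↔ Sat x A ∧ Sat x B := by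
  rw [Fml.and, hS.neg, hS.imp, hS.neg]
  tauto

open Classical in
lemma isPropVal (x : W) : IsPropVal fun A => decide (Sat x A) :=
  ⟨by simpa using hS.bot x, fun A B => by by_cases hA : Sat x A <;> simp [hS.imp, hA]⟩

end IsSat

lemma MNFrame.IsMND.valid_of_axD {W : Type*} {F : MNFrame W} (hF : F.IsMND) {A : Fml}
    (hA : AxD A) : Valid F A := by
  obtain ⟨B, rfl⟩ := hA
  intro Sat hS x
  rw [hS.neg, hS.and, hS.box, hS.box]
  rintro ⟨hB, hnB⟩
  rcases hF x {y | Sat y B} with hV | hV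
  · obtain ⟨y, hyB, hynB⟩ := hnB _ hV
    exact (hS.neg y B).1 hynB hyB
  · obtain ⟨y, hyB, hyB'⟩ := hB _ hV
    exact hyB hyB'

lemma MNProv.valid {W : Type*} {F : MNFrame W} {Ax : Fml → Prop}
    (hAx : ∀ A, Ax A → Valid F A) {A : Fml} (h : MNProv Ax A) : Valid F A := by
  induction h with
  | taut hA => exact fun Sat hS x => by simpa using isTautology_iff.1 hA _ (hS.isPropVal x)
  | ax hA => exact hAx _ hA
  | mp _ _ ihAB ihA => exact fun Sat hS x => (hS.imp x _ _).1 (ihAB Sat hS x) (ihA Sat hS x)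
  | nec _ ih =>
    refine fun Sat hS x => (hS.box x _).2 fun V hV => ?_
    obtain ⟨y, hy⟩ := F.rel_nonempty x V hV
    exact ⟨y, hy, ih Sat hS y⟩
  | rm _ ih =>
    refine fun Sat hS x => (hS.imp x _ _).2 fun hA => (hS.box x _).2 fun V hV => ?_
    obtain ⟨y, hy, hyA⟩ := (hS.box x _).1 hA V hV
    exact ⟨y, hy, (hS.imp y _ _).1 (ih Sat hS y) hyA⟩


structure IsSubformulaClosed (L : List Fml) : Prop where
  imp_left : ∀ {A B : Fml}, A.imp B ∈ L → A ∈ L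
  imp_right : ∀ {A B : Fml}, A.imp B ∈ L → B ∈ L
  box : ∀ {A : Fml}, A.box ∈ L → A ∈ L

namespace Fml

def subformulas : Fml → List Fml
  | var n => [var n]
  | bot => [bot]
  | imp A B => imp A B :: (A.subformulas ++ B.subformulas)
  | box A => box A :: A.subformulas

lemma mem_subformulas_self (A : Fml) : A ∈ A.subformulas := by
  cases A <;> simp [subformulas]

lemma subformulas_subset_of_mem {A B : Fml} (h : B ∈ A.subformulas) :
    B.subformulas ⊆ A.subformulas := by
  induction A with
  | var n | bot => simp_all [subformulas]
  | imp A₁ A₂ ih₁ ih₂ =>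
    simp only [subformulas, List.mem_cons, List.mem_append] at h
    rcases h with rfl | h | h
    · exact List.Subset.refl _
    · exact List.Subset.trans (ih₁ h) (by simp [subformulas])
    · exact List.Subset.trans (ih₂ h) (by simp [subformulas])
  | box A ih =>
    simp only [subformulas, List.mem_cons] at h
    rcases h with rfl | h
    · exact List.Subset.refl _
    · exact List.Subset.trans (ih h) (by simp [subformulas])

lemma isSubformulaClosed_subformulas (A : Fml) : IsSubformulaClosed A.subformulas where
  imp_left h := subformulas_subset_of_mem h (by simp [subformulas, mem_subformulas_self])
  imp_right h := subformulas_subset_of_mem h (by simp [subformulas, mem_subformulas_self])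
  box h := subformulas_subset_of_mem h (by simp [subformulas, mem_subformulas_self])

end Fml

def MNFrame.sat {W : Type*} (F : MNFrame W) (val : ℕ → W → Prop) : Fml → W → Prop
  | var n, x => val n x
  | bot, _ => False
  | imp A B, x => F.sat val A x → F.sat val B x
  | box A, x => ∀ V, F.rel x V → ∃ y ∈ V, F.sat val A y

lemma MNFrame.isSat_sat {W : Type*} (F : MNFrame W) (val : ℕ → W → Prop) :
    IsSat F (fun x A => F.sat val A x) :=
  ⟨fun _ => id, fun _ _ _ => Iff.rfl, fun _ _ => Iff.rfl⟩

section Canonical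

variable (Ax : Fml → Prop) (L : List Fml)

def World : Type := {w : Finset Fml // w ⊆ L.toFinset ∧ Consistent Ax (charFml L w)}

instance : Finite (World Ax L) :=
  Finite.of_injective
    (fun x : World Ax L => (⟨x.1, Finset.mem_powerset.2 x.2.1⟩ : L.toFinset.powerset))
    fun _ _ h => Subtype.ext (Subtype.mk.inj h)

variable {Ax L}

lemma World.exists_agreesOn (x : World Ax L) : ∃ v, IsPropVal v ∧ AgreesOn L x.1 v := by
  obtain ⟨v, hv, hvx⟩ := x.2.2.exists_val
  exact ⟨v, hv, (hv.charFml_eq_true L x.1).1 hvx⟩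

lemma World.consistent_of_entails {D : Fml} (x : World Ax L)
    (h : ∀ v, IsPropVal v → AgreesOn L x.1 v → v D = true) : Consistent Ax D :=
  x.2.2.of_entails fun v hv hvx => h v hv ((hv.charFml_eq_true L x.1).1 hvx)

lemma exists_world {D : Fml} (h : Consistent Ax D) :
    ∃ (y : World Ax L) (v : Fml → Bool), IsPropVal v ∧ v D = true ∧ AgreesOn L y.1 v := by
  obtain ⟨w, hwL, hw⟩ := h.exists_and_charFml L
  obtain ⟨v, hv, hvw⟩ := hw.exists_val
  have hcons : Consistent Ax (charFml L w) := hw.of_entails fun v hv h => by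
    simp_all [hv.and]
  simp only [hv.and, Bool.and_eq_true, hv.charFml_eq_true] at hvw
  exact ⟨⟨w, hwL, hcons⟩, v, hv, hvw⟩

lemma World.bot_notMem (x : World Ax L) : bot ∉ x.1 := by
  intro hx
  obtain ⟨v, hv, hvx⟩ := x.exists_agreesOn
  have hL : bot ∈ L := List.mem_toFinset.1 (x.2.1 hx)
  simpa [hv.bot] using (hvx bot hL).2 hx

lemma World.imp_mem_iff {A B : Fml} (x : World Ax L) (hAB : A.imp B ∈ L) (hA : A ∈ L)
    (hB : B ∈ L) : A.imp B ∈ x.1 ↔ (A ∈ x.1 → B ∈ x.1) := by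
  obtain ⟨v, hv, hvx⟩ := x.exists_agreesOn
  rw [← hvx _ hAB, ← hvx _ hA, ← hvx _ hB, hv.imp]
  cases v A <;> cases v B <;> decide

def canonicalRel (x : World Ax L) (V : Set (World Ax L)) : Prop :=
  V.Nonempty ∧ ∀ C, C.box ∈ x.1 → ∃ y ∈ V, C ∈ y.1

variable (Ax L) in
def canonicalFrame [Nonempty (World Ax L)] : MNFrame (World Ax L) where
  nonempty := ‹_›
  rel := canonicalRel
  rel_nonempty _ _ h := h.1
  mono _ _ _ h hVU :=
    ⟨h.1.mono hVU, fun C hC => (h.2 C hC).imp fun _ hy => ⟨hVU hy.1, hy.2⟩⟩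

lemma canonicalRel_setOf_notMem {B : Fml} (hL : IsSubformulaClosed L) (x : World Ax L)
    (hBL : B.box ∈ L) (hBx : B.box ∉ x.1) : canonicalRel x {y | B ∉ y.1} := by
  have hB : B ∈ L := hL.box hBL
  have hnbox : Consistent Ax B.box.neg := x.consistent_of_entails fun v hv hvx => by
    simpa [hv.neg] using mt (hvx _ hBL).1 hBx
  constructor
  · obtain ⟨y, v, hv, hvB, hvy⟩ := exists_world (L := L) hnbox.of_neg_box
    exact ⟨y, fun hy => by simp [hv.neg, (hvy B hB).2 hy] at hvB⟩
  · intro C hCx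
    have hCL : C.box ∈ L := List.mem_toFinset.1 (x.2.1 hCx)
    have hC : Consistent Ax (C.box.and B.box.neg) := x.consistent_of_entails fun v hv hvx => by
      simpa [hv.and, hv.neg, (hvx _ hCL).2 hCx] using mt (hvx _ hBL).1 hBx
    obtain ⟨y, v, hv, hvCB, hvy⟩ := exists_world (L := L) hC.of_box_and_neg_box
    simp only [hv.and, hv.neg, Bool.and_eq_true, Bool.not_eq_true'] at hvCB
    refine ⟨y, fun hy => ?_, (hvy C (hL.box hCL)).1 hvCB.1⟩
    simp [(hvy B hB).2 hy] at hvCB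

lemma World.exists_mem_mem (hD : ∀ A, AxD A → Ax A) (hL : IsSubformulaClosed L)
    (x : World Ax L) {B C : Fml} (hBx : B.box ∈ x.1) (hCx : C.box ∈ x.1) :
    ∃ y : World Ax L, B ∈ y.1 ∧ C ∈ y.1 := by
  have hBL : B.box ∈ L := List.mem_toFinset.1 (x.2.1 hBx)
  have hCL : C.box ∈ L := List.mem_toFinset.1 (x.2.1 hCx)
  have hBC : Consistent Ax (B.box.and C.box) := x.consistent_of_entails fun v hv hvx => by
    simp [hv.and, (hvx _ hBL).2 hBx, (hvx _ hCL).2 hCx]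
  obtain ⟨y, v, hv, hvBC, hvy⟩ := exists_world (L := L) (hBC.of_box_and_box hD)
  simp only [hv.and, Bool.and_eq_true] at hvBC
  exact ⟨y, (hvy B (hL.box hBL)).1 hvBC.1, (hvy C (hL.box hCL)).1 hvBC.2⟩

lemma canonicalFrame_isMND [Nonempty (World Ax L)] (hD : ∀ A, AxD A → Ax A)
    (hL : IsSubformulaClosed L) : (canonicalFrame Ax L).IsMND := by
  intro x V
  refine or_iff_not_imp_left.2 fun hV => ?_
  rcases V.eq_empty_or_nonempty with rfl | hVne
  · refine ⟨⟨x, id⟩, fun C hCx => ?_⟩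
    obtain ⟨y, hy, -⟩ := x.exists_mem_mem hD hL hCx hCx
    exact ⟨y, id, hy⟩
  · obtain ⟨C₀, hC₀x, hC₀V⟩ : ∃ C₀, C₀.box ∈ x.1 ∧ ∀ y ∈ V, C₀ ∉ y.1 := by
      simpa [canonicalFrame, canonicalRel, hVne] using hV
    obtain ⟨y₀, hy₀, -⟩ := x.exists_mem_mem hD hL hC₀x hC₀x
    refine ⟨⟨y₀, fun hy => hC₀V y₀ hy hy₀⟩, fun C hCx => ?_⟩
    obtain ⟨y, hyC, hyC₀⟩ := x.exists_mem_mem hD hL hCx hC₀x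
    exact ⟨y, fun hy => hC₀V y hy hyC₀, hyC⟩

lemma sat_canonicalFrame_iff [Nonempty (World Ax L)] (hL : IsSubformulaClosed L) {A : Fml}
    (hA : A ∈ L) (x : World Ax L) :
    (canonicalFrame Ax L).sat (fun n y => var n ∈ y.1) A x ↔ A ∈ x.1 := by
  induction A generalizing x with
  | var n => rfl
  | bot => exact iff_of_false id x.bot_notMem
  | imp A B ihA ihB =>
    rw [x.imp_mem_iff hA (hL.imp_left hA) (hL.imp_right hA), ← ihA (hL.imp_left hA),
      ← ihB (hL.imp_right hA)]
    rfl
  | box A ih =>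
    refine ⟨fun hsat => by_contra fun hAx => ?_, fun hAx V hV => ?_⟩
    · obtain ⟨y, hy, hyA⟩ := hsat _ (canonicalRel_setOf_notMem hL x hA hAx)
      exact hy ((ih (hL.box hA) y).1 hyA)
    · obtain ⟨y, hy, hyA⟩ := hV.2 A hAx
      exact ⟨y, hy, (ih (hL.box hA) y).2 hyA⟩

lemma MNProv.of_valid_canonicalFrame {A : Fml} (hL : IsSubformulaClosed L) (hA : A ∈ L)
    (h : ∀ [Nonempty (World Ax L)], Valid (canonicalFrame Ax L) A) : MNProv Ax A := by
  by_contra hnA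
  obtain ⟨x, v, hv, hvA, hvx⟩ := exists_world (L := L) (Consistent.of_not_mnprov hnA)
  have : Nonempty (World Ax L) := ⟨x⟩
  have hAx : A ∈ x.1 := (sat_canonicalFrame_iff hL hA x).1 (h _ (MNFrame.isSat_sat _ _) x)
  simp [hv.neg, (hvx A hA).2 hAx] at hvA

end Canonical

/-- A formula is a theorem of MND iff it is valid in all MND-frames
iff it is valid in all finite MND-frames. -/
theorem stmt8 (A : Fml) :
    (MND A ↔ ∀ (W : Type) (F : MNFrame W), F.IsMND → Valid F A) ∧
    (MND A ↔ ∀ (W : Type) (F : MNFrame W), Finite W → F.IsMND → Valid F A) := by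
  have sound (h : MND A) (W : Type) (F : MNFrame W) (hF : F.IsMND) : Valid F A :=
    h.valid fun _ => hF.valid_of_axD
  have complete (h : ∀ (W : Type) (F : MNFrame W), Finite W → F.IsMND → Valid F A) : MND A :=
    MNProv.of_valid_canonicalFrame (isSubformulaClosed_subformulas A) (mem_subformulas_self A)
      (h _ _ inferInstance (canonicalFrame_isMND (fun _ => id) (isSubformulaClosed_subformulas A)))
  exact ⟨⟨sound, fun h => complete fun W F _ => h W F⟩, ⟨fun h W F _ => sound h W F, complete⟩⟩
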